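/- Let p, u, v, w, q, z be real numbers. Define F : ℝ³ → Matrix 3 3 ℝ by F(y) = [[p, (u + v·y₁)·e^{−y₁}, v·e^{−y₁}], [(w + z·y₁)·e^{−y₁}, q·e^{−2y₁}, 0], [z·e^{−y₁}, 0, 0]], and let G(y) = (F(y) + F(y)ᵀ)/2 be its symmetric part. Then G(y) is invertible for every y ∈ ℝ³ if and only if q·(v+z) ≠ 0. -/

import Mathlib

/-!
The symmetric part of `F41 y` vanishes below the anti-diagonal, so its determinant is minus the
product of the anti-diagonal entries, `-(q e^{-2y₀}) ((v + z)/2 · e^{-y₀})²`. The exponential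
factor never vanishes, so invertibility at any one point is equivalent to `q (v + z) ≠ 0`.
-/

open Real Matrix

/-- The tensor `F` of the sigma model on the Manin triple `(4|1)`. -/
noncomputable def F41 (p u v w q z : ℝ) (y : Fin 3 → ℝ) : Matrix (Fin 3) (Fin 3) ℝ :=
  !![p,                             (u + v * y 0) * exp (-(y 0)), v * exp (-(y 0));
     (w + z * y 0) * exp (-(y 0)),  q * exp (-(2 * y 0)),         0;
     z * exp (-(y 0)),              0,                            0]

theorem Matrix.det_fin_three_antitriangular {R : Type*} [CommRing R] (a b c d e f : R) :
    !![a, b, c; d, e, 0; f, 0, 0].det = -(c * e * f) := by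
  simp [det_fin_three]

theorem symmPart_F41 (p u v w q z : ℝ) (y : Fin 3 → ℝ) :
    (1 / 2 : ℝ) • (F41 p u v w q z y + (F41 p u v w q z y)ᵀ) =
      !![p, (u + w + (v + z) * y 0) / 2 * exp (-(y 0)), (v + z) / 2 * exp (-(y 0));
         (u + w + (v + z) * y 0) / 2 * exp (-(y 0)), q * exp (-(2 * y 0)), 0;
         (v + z) / 2 * exp (-(y 0)), 0, 0] := by
  ext i j
  fin_cases i <;> fin_cases j <;> simp [F41] <;> ring

theorem det_symmPart_F41 (p u v w q z : ℝ) (y : Fin 3 → ℝ) :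
    ((1 / 2 : ℝ) • (F41 p u v w q z y + (F41 p u v w q z y)ᵀ)).det =
      -(q * (v + z) ^ 2 / 4) * exp (-(4 * y 0)) := by
  rw [symmPart_F41, det_fin_three_antitriangular,
    show -(4 * y 0) = -(y 0) + -(2 * y 0) + -(y 0) by ring, exp_add, exp_add]
  ring

/-- The metric of the `(4|1)` sigma model is invertible everywhere iff `q·(v+z) ≠ 0`. -/
theorem metric41_invertible_iff (p u v w q z : ℝ) :
    (∀ y : Fin 3 → ℝ,
        IsUnit ((1 / 2 : ℝ) • (F41 p u v w q z y + (F41 p u v w q z y)ᵀ))) ↔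
      q * (v + z) ≠ 0 := by
  simp only [isUnit_iff_isUnit_det, isUnit_iff_ne_zero, det_symmPart_F41]
  simp [exp_ne_zero]
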